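/- For complex numbers a, ã with negative real parts and c, c̃ ∈ ℂ, suppose |a − ã| ≤ Δ_A ≤ |Re(a)|/2 and |c − c̃| ≤ Δ_B. Then for every s on the imaginary axis, |c/(s − a) − c̃/(s − ã)| ≤ Δ_B/|Re(a)| + 4|c̃|·Δ_A/|Re(a)|². -/

import Mathlib

/-! Write `r = |Re a|`. On the imaginary axis `‖s - a‖ ≥ r`, hence `‖s - ã‖ ≥ r - Δ_A ≥ r / 2`,
and the identity `c/(s-a) - c̃/(s-ã) = (c - c̃)/(s-a) + c̃ (a - ã)/((s-a)(s-ã))` bounds the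
difference by `Δ_B / r + 2 ‖c̃‖ Δ_A / r²`. -/

lemma div_sub_div_eq_div_add_mul_div {K : Type*} [Field K] {s a a' : K} (c c' : K)
    (ha : s - a ≠ 0) (ha' : s - a' ≠ 0) :
    c / (s - a) - c' / (s - a') = (c - c') / (s - a) + c' * (a - a') / ((s - a) * (s - a')) := by
  field_simp
  ring

lemma norm_div_sub_div_le {K : Type*} [NormedField K] {s a a' : K} (c c' : K) {ρ ρ' : ℝ}
    (hρ : 0 < ρ) (hρ' : 0 < ρ') (ha : ρ ≤ ‖s - a‖) (ha' : ρ' ≤ ‖s - a'‖) :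
    ‖c / (s - a) - c' / (s - a')‖ ≤ ‖c - c'‖ / ρ + ‖c'‖ * ‖a - a'‖ / (ρ * ρ') := by
  have hsa : s - a ≠ 0 := norm_pos_iff.mp (hρ.trans_le ha)
  have hsa' : s - a' ≠ 0 := norm_pos_iff.mp (hρ'.trans_le ha')
  rw [div_sub_div_eq_div_add_mul_div c c' hsa hsa']
  calc _ ≤ ‖(c - c') / (s - a)‖ + ‖c' * (a - a') / ((s - a) * (s - a'))‖ := norm_add_le _ _
    _ = ‖c - c'‖ / ‖s - a‖ + ‖c'‖ * ‖a - a'‖ / (‖s - a‖ * ‖s - a'‖) := by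
      simp only [norm_div, norm_mul]
    _ ≤ _ := by gcongr

lemma abs_re_le_norm_sub_of_re_eq_zero {s : ℂ} (hs : s.re = 0) (a : ℂ) : |a.re| ≤ ‖s - a‖ := by
  simpa [hs] using Complex.abs_re_le_norm (s - a)

theorem single_term_perturbation_general (a atil c ctil : ℂ) (ΔA ΔB : ℝ)
    (ha : a.re < 0)
    (hΔA : ‖a - atil‖ ≤ ΔA) (hΔAsmall : ΔA ≤ |a.re| / 2)
    (hΔB : ‖c - ctil‖ ≤ ΔB) :
    ∀ s : ℂ, s.re = 0 →
      ‖c / (s - a) - ctil / (s - atil)‖ ≤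
        ΔB / |a.re| + 4 * ‖ctil‖ * ΔA / |a.re| ^ 2 := by
  intro s hs
  have hr : 0 < |a.re| := abs_pos.mpr ha.ne
  have hsa : |a.re| ≤ ‖s - a‖ := abs_re_le_norm_sub_of_re_eq_zero hs a
  have hsatil : |a.re| / 2 ≤ ‖s - atil‖ := by
    have := norm_sub_le_norm_sub_add_norm_sub s atil a
    linarith [norm_sub_rev atil a]
  calc _ ≤ ‖c - ctil‖ / |a.re| + ‖ctil‖ * ‖a - atil‖ / (|a.re| * (|a.re| / 2)) :=
        norm_div_sub_div_le c ctil hr (by positivity) hsa hsatil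
    _ = ‖c - ctil‖ / |a.re| + 2 * ‖ctil‖ * ‖a - atil‖ / |a.re| ^ 2 := by ring
    _ ≤ _ := by gcongr; norm_num

/-- Single-term perturbation estimate for `c/(s-a)` on the imaginary axis. -/
theorem single_term_perturbation (a atil c ctil : ℂ) (ΔA ΔB : ℝ)
    (ha : a.re < 0) (hatil : atil.re < 0)
    (hΔA : ‖a - atil‖ ≤ ΔA) (hΔAsmall : ΔA ≤ |a.re| / 2)
    (hΔB : ‖c - ctil‖ ≤ ΔB) :
    ∀ s : ℂ, s.re = 0 →
      ‖c / (s - a) - ctil / (s - atil)‖ ≤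
        ΔB / |a.re| + 4 * ‖ctil‖ * ΔA / |a.re| ^ 2 :=
  single_term_perturbation_general a atil c ctil ΔA ΔB ha hΔA hΔAsmall hΔB
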